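/- arXiv:2503.12003 — 2 statements merged into one kernel-verified Lean document; each statement's English description precedes it below -/
import Mathlib

section
/- The function LSE_ε⁺ : ℝ^q → ℝ defined by LSE_ε⁺(x) = (1/ε)·log(1 + Σ_{i=1}^q exp(ε·x_i)) is strictly convex for every ε > 0. -/
/-!
Write `1 + ∑ i, exp (ε * x i)` as the exponential sum of the vector `(0, ε x)`. Hölder's inequality
`∑ uₖ ^ a * vₖ ^ b ≤ (∑ u) ^ a * (∑ v) ^ b`, obtained from weighted AM–GM applied to `uₖ / ∑ u` and
`vₖ / ∑ v`, gives convexity of log-sum-exp, strictly unless `u` and `v` are proportional. For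
`u = exp (0, ε x)` and `v = exp (0, ε y)` proportionality means that `x - y` is constant, and the common
zero coordinate forces that constant to be `0`.
-/

open Real Finset

theorem Real.sum_rpow_mul_rpow_lt {ι : Type*} [Fintype ι] {u v : ι → ℝ}
    (hu : ∀ k, 0 < u k) (hv : ∀ k, 0 < v k) {a b : ℝ} (ha : 0 < a) (hb : 0 < b)
    (hab : a + b = 1) {i j : ι} (hij : u i * v j ≠ u j * v i) :
    ∑ k, u k ^ a * v k ^ b < (∑ k, u k) ^ a * (∑ k, v k) ^ b := by
  set A := ∑ k, u k
  set B := ∑ k, v k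
  have hA : 0 < A := sum_pos (fun k _ => hu k) ⟨i, mem_univ i⟩
  have hB : 0 < B := sum_pos (fun k _ => hv k) ⟨i, mem_univ i⟩
  have hAB : 0 < A ^ a * B ^ b := by positivity
  have hterm : ∀ k, u k ^ a * v k ^ b / (A ^ a * B ^ b) = (u k / A) ^ a * (v k / B) ^ b := by
    intro k
    rw [div_rpow (hu k).le hA.le, div_rpow (hv k).le hB.le]
    field_simp
  obtain ⟨k₀, hk₀⟩ : ∃ k, u k / A ≠ v k / B := by
    by_contra! h
    have hi := h i
    have hj := h j
    field_simp at hi hj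
    exact hij (mul_right_cancel₀ hB.ne' (by linear_combination v j * hi - v i * hj))
  have hlt : ∑ k, (u k / A) ^ a * (v k / B) ^ b < ∑ k, (a * (u k / A) + b * (v k / B)) := by
    apply sum_lt_sum
    · intro k _
      exact geom_mean_le_arith_mean2_weighted ha.le hb.le (div_pos (hu k) hA).le
        (div_pos (hv k) hB).le hab
    · exact ⟨k₀, mem_univ _, (geom_mean_lt_arith_mean2_weighted_iff_of_pos ha hb
        (div_pos (hu k₀) hA).le (div_pos (hv k₀) hB).le hab).2 hk₀⟩
  have hsum : ∑ k, (a * (u k / A) + b * (v k / B)) = 1 := by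
    rw [sum_add_distrib, ← mul_sum, ← mul_sum, ← sum_div, ← sum_div, div_self hA.ne',
      div_self hB.ne', mul_one, mul_one, hab]
  rw [← div_lt_one hAB, sum_div]
  simp only [hterm]
  linarith

theorem Real.log_sum_exp_lt {ι : Type*} [Fintype ι] {z w : ι → ℝ} {a b : ℝ} (ha : 0 < a)
    (hb : 0 < b) (hab : a + b = 1) {i j : ι} (hij : z i + w j ≠ z j + w i) :
    log (∑ k, exp (a * z k + b * w k)) <
      a * log (∑ k, exp (z k)) + b * log (∑ k, exp (w k)) := by
  have hpos : ∀ v : ι → ℝ, 0 < ∑ k, exp (v k) :=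
    fun v => sum_pos (fun k _ => exp_pos _) ⟨i, mem_univ i⟩
  have hterm : ∀ k, exp (a * z k + b * w k) = exp (z k) ^ a * exp (w k) ^ b := by
    intro k
    rw [← exp_mul, ← exp_mul, ← exp_add]
    ring_nf
  have hholder := sum_rpow_mul_rpow_lt (u := fun k => exp (z k)) (v := fun k => exp (w k))
    (fun _ => exp_pos _) (fun _ => exp_pos _) ha hb hab
    (i := i) (j := j) (by rw [← exp_add, ← exp_add]; exact exp_injective.ne hij)
  simp only [← hterm] at hholder
  calc log (∑ k, exp (a * z k + b * w k))
      < log ((∑ k, exp (z k)) ^ a * (∑ k, exp (w k)) ^ b) :=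
        log_lt_log (hpos _) hholder
    _ = a * log (∑ k, exp (z k)) + b * log (∑ k, exp (w k)) := by
        rw [log_mul (rpow_pos_of_pos (hpos z) a).ne' (rpow_pos_of_pos (hpos w) b).ne',
          log_rpow (hpos z), log_rpow (hpos w)]

theorem stmt_1 (q : ℕ) (ε : ℝ) (hε : 0 < ε) :
    StrictConvexOn ℝ Set.univ
      (fun x : Fin q → ℝ => (1 / ε) * Real.log (1 + ∑ i, Real.exp (ε * x i))) := by
  refine ⟨convex_univ, fun x _ y _ hxy a b ha hb hab => ?_⟩
  obtain ⟨i₀, hi₀⟩ := Function.ne_iff.1 hxy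
  have key := log_sum_exp_lt (z := fun o : Option (Fin q) => o.elim 0 (ε * x ·))
    (w := fun o => o.elim 0 (ε * y ·)) ha hb hab (i := none) (j := some i₀)
    (by simpa [hε.ne'] using fun h => hi₀ h.symm)
  simp only [Fintype.sum_option, Option.elim, mul_zero, add_zero, exp_zero] at key
  simp only [smul_eq_mul, Pi.add_apply, Pi.smul_apply, mul_add, mul_left_comm ε]
  calc 1 / ε * log (1 + ∑ i, exp (a * (ε * x i) + b * (ε * y i)))
      < 1 / ε * (a * log (1 + ∑ i, exp (ε * x i)) + b * log (1 + ∑ i, exp (ε * y i))) :=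
        mul_lt_mul_of_pos_left key (by positivity)
    _ = _ := by ring
end

section
/- The Hessian of LSE_ε⁺ at any point x ∈ ℝ^q is positive definite. -/
/-!
With `z k = exp (ε * x k)` and `T = 1 + ∑ k, z k`, the gradient of `LSE_ε⁺` is the softmax
`z j / T`, so its Hessian is `ε / T² • (T • diagonal z - vecMulVec z z)`. The quadratic form of
this matrix at `v` is `ε / T² * (T * ∑ z i * v i ^ 2 - (∑ z i * v i) ^ 2)`, and weighted
Cauchy–Schwarz bounds `(∑ z i * v i) ^ 2` by `(∑ z i) * ∑ z i * v i ^ 2`, which is strictly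
smaller because `T` exceeds `∑ z i` by the extra `1`.
-/

open Real Finset Matrix

variable {ι : Type*} [Fintype ι]

theorem posDef_smul_diagonal_sub_vecMulVec [DecidableEq ι] {z : ι → ℝ} (hz : ∀ i, 0 < z i)
    {s : ℝ} (hs : ∑ i, z i < s) : (s • diagonal z - vecMulVec z z).PosDef := by
  refine .of_dotProduct_mulVec_pos ?_ fun v hv => ?_
  · ext i j
    rcases eq_or_ne i j with rfl | hij
    · simp [vecMulVec]
    · simp [vecMulVec, hij, hij.symm, mul_comm]
  have hquad : star v ⬝ᵥ ((s • diagonal z - vecMulVec z z) *ᵥ v) =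
      s * ∑ i, z i * v i ^ 2 - (∑ i, z i * v i) ^ 2 := by
    simp only [sub_mulVec, vecMulVec_mulVec, dotProduct_sub, smul_mulVec, dotProduct_smul]
    simp only [dotProduct, star_trivial, mulVec_diagonal, smul_eq_mul,
      MulOpposite.smul_eq_mul_unop, MulOpposite.unop_op, sq, mul_sum, sum_mul]
    simp only [mul_comm, mul_left_comm]
  have hcs : (∑ i, z i * v i) ^ 2 ≤ (∑ i, z i) * ∑ i, z i * v i ^ 2 :=
    sum_sq_le_sum_mul_sum_of_sq_le_mul _ (fun i _ => (hz i).le)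
      (fun i _ => by positivity [hz i]) (fun i _ => le_of_eq (by ring))
  obtain ⟨i, hi⟩ : ∃ i, v i ≠ 0 := Function.ne_iff.mp hv
  have hpos : 0 < ∑ i, z i * v i ^ 2 :=
    sum_pos' (fun j _ => by positivity [hz j]) ⟨i, mem_univ i, mul_pos (hz i) (by positivity)⟩
  rw [hquad]
  nlinarith

noncomputable def hessian [DecidableEq ι] (f : (ι → ℝ) → ℝ) (x : ι → ℝ) : Matrix ι ι ℝ :=
  of fun i j => fderiv ℝ (fun y => fderiv ℝ f y (Pi.single j 1)) x (Pi.single i 1)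

section LSEPlus

variable (ε : ℝ)

noncomputable def partitionFunction (w : ι → ℝ) : ℝ := 1 + ∑ k, exp (ε * w k)

noncomputable def lsePlus (w : ι → ℝ) : ℝ := (1 / ε) * log (partitionFunction ε w)

noncomputable def softmaxPlus (j : ι) (w : ι → ℝ) : ℝ := exp (ε * w j) / partitionFunction ε w

lemma partitionFunction_pos (w : ι → ℝ) : 0 < partitionFunction ε w := by
  unfold partitionFunction
  positivity

lemma hasFDerivAt_exp_mul_apply (w : ι → ℝ) (k : ι) :
    HasFDerivAt (fun v : ι → ℝ => exp (ε * v k))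
      ((ε * exp (ε * w k)) • (ContinuousLinearMap.proj k : (ι → ℝ) →L[ℝ] ℝ)) w := by
  have h := ((hasFDerivAt_apply k w).const_mul ε).exp
  rwa [smul_smul, mul_comm] at h

lemma hasFDerivAt_partitionFunction (w : ι → ℝ) :
    HasFDerivAt (partitionFunction ε)
      (∑ k, (ε * exp (ε * w k)) • (ContinuousLinearMap.proj k : (ι → ℝ) →L[ℝ] ℝ)) w :=
  (HasFDerivAt.fun_sum fun k _ => hasFDerivAt_exp_mul_apply ε w k).const_add 1

lemma fderiv_lsePlus_apply_single [DecidableEq ι] (hε : ε ≠ 0) (y : ι → ℝ) (j : ι) :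
    fderiv ℝ (lsePlus ε) y (Pi.single j 1) = softmaxPlus ε j y := by
  have h := ((hasFDerivAt_partitionFunction ε y).log (partitionFunction_pos ε y).ne').const_mul
    (1 / ε)
  rw [HasFDerivAt.fderiv (f := lsePlus ε) h, softmaxPlus]
  simp only [one_div, _root_.smul_apply, _root_.sum_apply, ContinuousLinearMap.proj_apply,
    Pi.single_apply, smul_eq_mul, mul_ite, mul_one, mul_zero, sum_ite_eq', mem_univ, if_true]
  field_simp

lemma fderiv_softmaxPlus_apply_single [DecidableEq ι] (x : ι → ℝ) (i j : ι) :
    fderiv ℝ (softmaxPlus ε j) x (Pi.single i 1) =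
      ε / partitionFunction ε x ^ 2 * (partitionFunction ε x * (if i = j then exp (ε * x i) else 0)
        - exp (ε * x i) * exp (ε * x j)) := by
  have h := (hasFDerivAt_exp_mul_apply ε x j).fun_mul
    ((hasDerivAt_inv (partitionFunction_pos ε x).ne').comp_hasFDerivAt x
      (hasFDerivAt_partitionFunction ε x))
  rw [HasFDerivAt.fderiv (f := softmaxPlus ε j) (by exact h)]
  simp only [Function.comp_apply, _root_.add_apply, _root_.smul_apply, _root_.sum_apply,
    ContinuousLinearMap.proj_apply, Pi.single_apply, smul_eq_mul, mul_ite, mul_one, mul_zero,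
    sum_ite_eq', mem_univ, if_true]
  have hT := (partitionFunction_pos ε x).ne'
  rcases eq_or_ne i j with rfl | hij
  · simp only [if_true]
    field_simp
    ring
  · simp only [if_neg hij, if_neg hij.symm]
    field_simp
    ring

theorem hessian_lsePlus [DecidableEq ι] (hε : ε ≠ 0) (x : ι → ℝ) :
    hessian (lsePlus ε) x = (ε / partitionFunction ε x ^ 2) •
      (partitionFunction ε x • diagonal (fun k => exp (ε * x k)) -
        vecMulVec (fun k => exp (ε * x k)) (fun k => exp (ε * x k))) := by
  ext i j
  simp only [hessian, of_apply, fderiv_lsePlus_apply_single ε hε,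
    fderiv_softmaxPlus_apply_single]
  simp [diagonal_apply, vecMulVec]

end LSEPlus

/-- The Hessian of `LSE_ε⁺` (as the matrix of second partial derivatives) is
positive definite at every point. -/
theorem stmt_2 (q : ℕ) (ε : ℝ) (hε : 0 < ε) (x : Fin q → ℝ) :
    (Matrix.of (fun i j : Fin q =>
      fderiv ℝ (fun y : Fin q → ℝ =>
        fderiv ℝ (fun w : Fin q → ℝ => (1 / ε) * Real.log (1 + ∑ k, Real.exp (ε * w k)))
          y (Pi.single j 1)) x (Pi.single i 1))).PosDef := by
  change (hessian (lsePlus ε) x).PosDef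
  rw [hessian_lsePlus ε hε.ne']
  have hT := partitionFunction_pos ε x
  exact (posDef_smul_diagonal_sub_vecMulVec (fun k => exp_pos _) (lt_one_add _)).smul
    (div_pos hε (pow_pos hT 2))
end
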